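/- arXiv:1410.2501 — 2 statements merged into one kernel-verified Lean document; each statement's English description precedes it below -/
import Mathlib

section
/- If 3 ≤ t ≤ n−2, then Opt_0 strictly dominates the protocol P0_opt of Halpern, Moses, and Waarts; moreover there exists an adversary with exactly t crash failures for which every correct process decides 1 after 3 rounds in Opt_0 but only after t+1 rounds in P0_opt. In particular, P0_opt is beatable. -/
attribute [local instance] Classical.propDecidable

/-- An adversary in the synchronous crash-failure model: an input vector of binary
initial values, a failure pattern given by the delivery relation `F` (`F m j i` means
the message sent by `j` at time `m` is delivered to `i` at time `m+1`, i.e. in round `m+1`),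
and a crash round for each process (`⊤` meaning the process never crashes).
A process behaves correctly before its crashing round and sends nothing afterwards;
during its crashing round it may send to an arbitrary subset. -/
structure Adversary (n : ℕ) where
  init : Fin n → Bool
  F : ℕ → Fin n → Fin n → Prop
  crash : Fin n → ℕ∞
  crash_pos : ∀ j, 1 ≤ crash j
  before_crash : ∀ (m : ℕ) (j i : Fin n), ((m + 1 : ℕ) : ℕ∞) < crash j → F m j i
  after_crash : ∀ (m : ℕ) (j i : Fin n), crash j < ((m + 1 : ℕ) : ℕ∞) → ¬ F m j i

namespace Adversary

variable {n : ℕ}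

/-- A process is faulty if it crashes at some point. -/
def Faulty (A : Adversary n) (j : Fin n) : Prop := A.crash j ≠ ⊤

/-- The number `f` of actual failures in the run determined by the adversary. -/
noncomputable def numFaults (A : Adversary n) : ℕ := {j | A.Faulty j}.ncard

/-- A process is active at time `m` if it has not crashed before time `m`. -/
def Active (A : Adversary n) (j : Fin n) (m : ℕ) : Prop := ((m : ℕ) : ℕ∞) < A.crash j

end Adversary

/-- `Seen A ⟨j,ℓ⟩ ⟨i,m⟩`: node `⟨j,ℓ⟩` is in the view (communication graph) of node
`⟨i,m⟩`, i.e. there is a message chain from `⟨j,ℓ⟩` to `⟨i,m⟩`. -/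
inductive Seen {n : ℕ} (A : Adversary n) : Fin n × ℕ → Fin n × ℕ → Prop
  | refl (p : Fin n × ℕ) : Seen A p p
  | self {p : Fin n × ℕ} {i : Fin n} {m : ℕ} : Seen A p (i, m) → Seen A p (i, m + 1)
  | step {p : Fin n × ℕ} {j i : Fin n} {m : ℕ} : Seen A p (j, m) → A.F m j i →
      Seen A p (i, m + 1)

open Adversary

/-- Two adversaries give process `i` the same view at time `m` in a full-information
protocol: the same nodes are seen, with the same initial values at seen time-0 nodes
and the same incoming edges at seen later nodes. -/
def sameView {n : ℕ} (A B : Adversary n) (i : Fin n) (m : ℕ) : Prop :=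
  (∀ p, Seen A p (i, m) ↔ Seen B p (i, m)) ∧
  (∀ j, Seen A (j, 0) (i, m) → A.init j = B.init j) ∧
  (∀ (k : ℕ) (j j' : Fin n), Seen A (j', k + 1) (i, m) → (A.F k j j' ↔ B.F k j j'))

/-- The local state of (active) process `i` at time `m` is the same under both
adversaries: `i` is active in both and has the same full-information view. -/
def sameLocal {n : ℕ} (A B : Adversary n) (i : Fin n) (m : ℕ) : Prop :=
  A.Active i m ∧ B.Active i m ∧ sameView A B i m

/-- The runs of the system are those generated by adversaries with at most `t` crashes. -/
def Valid {n : ℕ} (t : ℕ) (A : Adversary n) : Prop := A.numFaults ≤ t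

/-- Knowledge in the full-information protocol: `i` knows the fact `φ` at time `m`
iff `φ` holds at time `m` in every run (with at most `t` failures) in which `i` has
the same local state. -/
def Knows {n : ℕ} (t : ℕ) (φ : Adversary n → ℕ → Prop) (A : Adversary n) (i : Fin n)
    (m : ℕ) : Prop :=
  ∀ B : Adversary n, Valid t B → sameLocal A B i m → φ B m

/-- The fact `∃v`: some process has initial value `v`. -/
def existsVal {n : ℕ} (v : Bool) : Adversary n → ℕ → Prop := fun A _ => ∃ j, A.init j = v

/-- Node `⟨j',m'⟩` is revealed to `⟨i,m⟩`: either it is seen by `⟨i,m⟩`, or for some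
seen node `⟨i',m'⟩` the edge `(⟨j',m'-1⟩,⟨i',m'⟩)` is absent from `i`'s view
(proving that `j'` crashed before time `m'`). -/
def RevealedNode {n : ℕ} (A : Adversary n) (j' : Fin n) (m' : ℕ) (i : Fin n) (m : ℕ) :
    Prop :=
  Seen A (j', m') (i, m) ∨
  ∃ (i' : Fin n) (k : ℕ), m' = k + 1 ∧ Seen A (i', k + 1) (i, m) ∧ ¬ A.F k j' i'

/-- Time `k` is revealed to `⟨i,m⟩` if every node `⟨j',k⟩` is revealed to `⟨i,m⟩`. -/
def RevealedTime {n : ℕ} (A : Adversary n) (k : ℕ) (i : Fin n) (m : ℕ) : Prop :=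
  ∀ j', RevealedNode A j' k i m

/-- A hidden path w.r.t. `⟨i,m⟩`: for each `k ≤ m` a node `⟨j_k,k⟩` not revealed to `⟨i,m⟩`. -/
def HiddenPath {n : ℕ} (A : Adversary n) (i : Fin n) (m : ℕ) : Prop :=
  ∃ js : ℕ → Fin n, ∀ k ≤ m, ¬ RevealedNode A (js k) k i m

/-- `not-known(∃0)`: no process active at time `m` knows `∃0`. -/
def notKnown0 {n : ℕ} (t : ℕ) : Adversary n → ℕ → Prop :=
  fun A m => ∀ j, A.Active j m → ¬ Knows t (existsVal false) A j m

/-- A (full-information, deterministic) decision protocol, described by the decision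
status function: `P A i m = some v` iff by time `m` process `i` has decided `v`
in the run determined by adversary `A`. -/
abbrev ProtoDec (n : ℕ) : Type := Adversary n → Fin n → ℕ → Option Bool

/-- Sanity conditions making a decision-status function a protocol: decisions are
irrevocable, and (for active processes) depend only on the local state. -/
def IsProtocol {n : ℕ} (t : ℕ) (P : ProtoDec n) : Prop :=
  (∀ A i m v, P A i m = some v → P A i (m + 1) = some v) ∧
  (∀ A B i m, Valid t A → Valid t B → sameLocal A B i m → P A i m = P B i m)

/-- Process `i` performs the action `decide(v)` at time `m`: it is decided on `v`
at `m` and was undecided before. -/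
def DecidesAt {n : ℕ} (P : ProtoDec n) (A : Adversary n) (i : Fin n) (m : ℕ) (v : Bool) :
    Prop :=
  P A i m = some v ∧ ∀ k < m, P A i k = none

/-- Decision: every correct process eventually decides. -/
def Decision {n : ℕ} (t : ℕ) (P : ProtoDec n) : Prop :=
  ∀ A : Adversary n, Valid t A → ∀ i, ¬ A.Faulty i → ∃ m, P A i m ≠ none

/-- Validity: if all initial values are `v` then correct processes decide `v`. -/
def Validity {n : ℕ} (t : ℕ) (P : ProtoDec n) : Prop :=
  ∀ A : Adversary n, Valid t A → ∀ v : Bool, (∀ j, A.init j = v) →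
    ∀ i m w, ¬ A.Faulty i → P A i m = some w → w = v

/-- Agreement: all correct processes decide on the same value. -/
def Agreement {n : ℕ} (t : ℕ) (P : ProtoDec n) : Prop :=
  ∀ A : Adversary n, Valid t A → ∀ i j m m' v w, ¬ A.Faulty i → ¬ A.Faulty j →
    P A i m = some v → P A j m' = some w → v = w

def ConsensusSolves {n : ℕ} (t : ℕ) (P : ProtoDec n) : Prop :=
  Decision t P ∧ Validity t P ∧ Agreement t P

/-- Uniform Agreement: all processes that decide (faulty or not) decide the same value. -/
def UniformAgreement {n : ℕ} (t : ℕ) (P : ProtoDec n) : Prop :=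
  ∀ A : Adversary n, Valid t A → ∀ i j m m' v w,
    P A i m = some v → P A j m' = some w → v = w

def UniformConsensusSolves {n : ℕ} (t : ℕ) (P : ProtoDec n) : Prop :=
  Decision t P ∧ Validity t P ∧ UniformAgreement t P

/-- `Q` dominates `P`: for every adversary and process, if `i` has decided by time `m`
in `P` then `i` has decided by time `m` in `Q`. -/
def Dominates {n : ℕ} (t : ℕ) (Q P : ProtoDec n) : Prop :=
  ∀ A : Adversary n, Valid t A → ∀ i m, P A i m ≠ none → Q A i m ≠ none

def StrictlyDominates {n : ℕ} (t : ℕ) (Q P : ProtoDec n) : Prop :=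
  Dominates t Q P ∧ ¬ Dominates t P Q

/-- Turn a per-time decision rule into a decision-status function (the first decision
taken is kept forever). -/
def runDec (step : ℕ → Option Bool) : ℕ → Option Bool
  | 0 => step 0
  | m + 1 => (runDec step m).elim (step (m + 1)) some

/-- The protocol `P₀`: decide 0 as soon as `K_i ∃0` holds, otherwise decide 1 at time `t+1`. -/
noncomputable def P0 (n t : ℕ) : ProtoDec n := fun A i =>
  runDec fun m =>
    if Knows t (existsVal false) A i m then some false
    else if m = t + 1 then some true
    else none

/-- The unbeatable protocol `Opt₀`: decide 0 as soon as `K_i ∃0` holds, and decide 1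
as soon as `K_i not-known(∃0)` holds. -/
noncomputable def Opt0 (n t : ℕ) : ProtoDec n := fun A i =>
  runDec fun m =>
    if Knows t (existsVal false) A i m then some false
    else if Knows t (notKnown0 t) A i m then some true
    else none

/-- The number of processes with initial value `false` (0). -/
noncomputable def zeros {n : ℕ} (A : Adversary n) : ℕ :=
  (Finset.univ.filter fun j => A.init j = false).card

/-- The number of processes with initial value `true` (1). -/
noncomputable def ones {n : ℕ} (A : Adversary n) : ℕ :=
  (Finset.univ.filter fun j => A.init j = true).card

/-- The fact `Maj = 0`: at least `n/2` initial values are 0. -/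
def Maj0 (n : ℕ) : Adversary n → ℕ → Prop := fun A _ => n ≤ 2 * zeros A

/-- The fact `Maj = 1`: strictly more than `n/2` initial values are 1. -/
def Maj1 (n : ℕ) : Adversary n → ℕ → Prop := fun A _ => n < 2 * ones A

noncomputable def seenZeros {n : ℕ} (A : Adversary n) (i : Fin n) (m : ℕ) : ℕ :=
  (Finset.univ.filter fun j => Seen A (j, 0) (i, m) ∧ A.init j = false).card

noncomputable def seenOnes {n : ℕ} (A : Adversary n) (i : Fin n) (m : ℕ) : ℕ :=
  (Finset.univ.filter fun j => Seen A (j, 0) (i, m) ∧ A.init j = true).card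

/-- `Maj(vals(i,m))`: 0 if at least half of the initial values known to `i` at `m`
are 0, and 1 otherwise. -/
noncomputable def MajSeen {n : ℕ} (A : Adversary n) (i : Fin n) (m : ℕ) : Bool :=
  if seenOnes A i m ≤ seenZeros A i m then false else true

/-- The unbeatable majority consensus protocol `Opt_Maj`. -/
noncomputable def OptMaj (n t : ℕ) : ProtoDec n := fun A i =>
  runDec fun m =>
    if Knows t (Maj0 n) A i m then some false
    else if Knows t (Maj1 n) A i m then some true
    else if ∃ k ≤ m, RevealedTime A k i m then some (MajSeen A i m)
    else none

/-- The fact `∀1`: all initial values are 1. -/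
def all1 (n : ℕ) : Adversary n → ℕ → Prop := fun A _ => ∀ j, A.init j = true

/-- The sender set of `i` repeats at `⟨i,m⟩`: `i` hears from the same set of processes
in rounds `m-1` and `m` (only meaningful for `m ≥ 2`). -/
def senderSetRepeats {n : ℕ} (A : Adversary n) (i : Fin n) (m : ℕ) : Prop :=
  ∀ j, (A.F (m - 2) j i ↔ A.F (m - 1) j i)

/-- The protocol `P0_opt` of Halpern, Moses and Waarts. -/
noncomputable def P0opt (n t : ℕ) : ProtoDec n := fun A i =>
  runDec fun m =>
    if Knows t (existsVal false) A i m then some false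
    else if Knows t (all1 n) A i m ∨ (2 ≤ m ∧ senderSetRepeats A i m) then some true
    else none

/-- The fact `∃correct(v)`: some correct (never-failing) process knows `∃v`. -/
def ExistsCorrectKnows {n : ℕ} (t : ℕ) (v : Bool) : Adversary n → ℕ → Prop :=
  fun A m => ∃ j, ¬ A.Faulty j ∧ Knows t (existsVal v) A j m

/-- The number `d` of failures process `i` knows of at time `m`: the number of
processes `j ≠ i` from which `i` receives no message in round `m`. -/
noncomputable def knownFaults {n : ℕ} (A : Adversary n) (i : Fin n) : ℕ → ℕ
  | 0 => 0
  | m + 1 => (Finset.univ.filter fun j => j ≠ i ∧ ¬ A.F m j i).card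

/-- The protocol `u-P₀` for uniform consensus: decide 0 as soon as
`K_i ∃correct(0)` holds, otherwise decide 1 at time `t+1`. -/
noncomputable def uP0 (n t : ℕ) : ProtoDec n := fun A i =>
  runDec fun m =>
    if Knows t (ExistsCorrectKnows t false) A i m then some false
    else if m = t + 1 then some true
    else none

/-- The unbeatable uniform consensus protocol `u-Opt₀`. -/
noncomputable def uOpt0 (n t : ℕ) : ProtoDec n := fun A i =>
  runDec fun m =>
    if Knows t (ExistsCorrectKnows t false) A i m then some false
    else if ¬ Knows t (existsVal false) A i m ∧ ∃ k ≤ m, RevealedTime A k i m then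
      some true
    else none

/-- All decisions in the run `P[A]` are taken at or before time `m`. -/
def AllDecidedBy {n : ℕ} (P : ProtoDec n) (A : Adversary n) (m : ℕ) : Prop :=
  ∀ i k, P A i k ≠ none → P A i m ≠ none

/-- `Q` last-decider dominates `P`. -/
def LDDominates {n : ℕ} (t : ℕ) (Q P : ProtoDec n) : Prop :=
  ∀ A : Adversary n, Valid t A → ∀ m, AllDecidedBy P A m → AllDecidedBy Q A m

/-- A 0-chain for `⟨i,m⟩`: distinct processes `j₀,…,j_d = i` with `d ≤ m`, `j₀` having
initial value 0, and `j_k` receiving a message from `j_{k-1}` at time `k` (round `k`). -/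
def ZeroChain {n : ℕ} (A : Adversary n) (i : Fin n) (m : ℕ) : Prop :=
  ∃ d ≤ m, ∃ js : ℕ → Fin n, js d = i ∧
    (∀ k ≤ d, ∀ l ≤ d, js k = js l → k = l) ∧
    A.init (js 0) = false ∧
    ∀ k, 1 ≤ k → k ≤ d → A.F (k - 1) (js (k - 1)) (js k)


/-!
Whenever `P0_opt` decides 1 at `⟨i,m⟩` without knowing `∃0`, some time `k ≤ m` is revealed to
`⟨i,m⟩`: time 0 if `i` knows `∀1`, time `m - 1` if its sender set repeats. A revealed time
blocks every hidden 0, so `i` knows `not-known(∃0)` and `Opt₀` decides no later.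

In the witnessing run the sender set of a correct process changes in every round up to `t`, and
the silent crash in round 1 could hide a 0 forever, so `P0_opt` waits until time `t + 1`.
In `Opt₀`, however, time 2 is revealed at time 3: the round-3 messages of the paper's
processes 4 and `n` show that processes 1, 2, 3 did not reach them in round 2.
-/

namespace Seen

variable {n : ℕ} {A B : Adversary n}

theorem mono (h : ∀ k j j', A.F k j j' → B.F k j j') {p q : Fin n × ℕ} (hs : Seen A p q) :
    Seen B p q := by
  induction hs with
  | refl => exact .refl _
  | self _ ih => exact .self ih
  | step _ hF ih => exact .step ih (h _ _ _ hF)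

theorem iff_of_F_iff (h : ∀ k j j', A.F k j j' ↔ B.F k j j') {p q : Fin n × ℕ} :
    Seen A p q ↔ Seen B p q :=
  ⟨mono fun k j j' => (h k j j').mp, mono fun k j j' => (h k j j').mpr⟩

theorem snd_le {p q : Fin n × ℕ} (hs : Seen A p q) : p.2 ≤ q.2 := by
  induction hs <;> omega

theorem eq_of_snd_eq {p q : Fin n × ℕ} (hs : Seen A p q) (h : p.2 = q.2) : p = q := by
  cases hs with
  | refl => rfl
  | self hs => have := hs.snd_le; dsimp only at h; omega
  | step hs _ => have := hs.snd_le; dsimp only at h; omega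

theorem trans {p q r : Fin n × ℕ} (h₁ : Seen A p q) (h₂ : Seen A q r) : Seen A p r := by
  induction h₂ with
  | refl => exact h₁
  | self _ ih => exact .self ih
  | step _ hF ih => exact .step ih hF

theorem exists_mid {k : ℕ} {p q : Fin n × ℕ} (hs : Seen A p q) (h₁ : p.2 ≤ k) (h₂ : k ≤ q.2) :
    ∃ x, Seen A p (x, k) ∧ Seen A (x, k) q := by
  induction hs with
  | refl => obtain rfl : k = p.2 := le_antisymm h₂ h₁; exact ⟨p.1, .refl _, .refl _⟩
  | @self i m hs ih =>
      rcases Nat.lt_or_ge k (m + 1) with hk | hk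
      · obtain ⟨x, hx₁, hx₂⟩ := ih (by omega)
        exact ⟨x, hx₁, .self hx₂⟩
      · obtain rfl : k = m + 1 := by omega
        exact ⟨i, .self hs, .refl _⟩
  | @step j i m hs hF ih =>
      rcases Nat.lt_or_ge k (m + 1) with hk | hk
      · obtain ⟨x, hx₁, hx₂⟩ := ih (by omega)
        exact ⟨x, hx₁, .step hx₂ hF⟩
      · obtain rfl : k = m + 1 := by omega
        exact ⟨i, .step hs hF, .refl _⟩

theorem fst_eq_of_silent {j : Fin n} {k : ℕ} (h : ∀ l y, k ≤ l → ¬ A.F l j y)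
    {q : Fin n × ℕ} (hs : Seen A (j, k) q) : q.1 = j := by
  suffices q.1 = j ∧ k ≤ q.2 from this.1
  induction hs with
  | refl => exact ⟨rfl, le_rfl⟩
  | self _ ih => exact ⟨ih.1, by omega⟩
  | step _ hF ih => obtain ⟨rfl, hk⟩ := ih; exact absurd hF (h _ _ hk)

theorem eq_or_F_of_succ {x i : Fin n} {m : ℕ}
    (h : Seen A (x, m) (i, m + 1)) : x = i ∨ A.F m x i := by
  cases h with
  | self h => exact Or.inl (Prod.ext_iff.mp (h.eq_of_snd_eq rfl)).1
  | step h hF => obtain ⟨rfl, -⟩ := Prod.ext_iff.mp (h.eq_of_snd_eq rfl); exact Or.inr hF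

end Seen

theorem Adversary.not_F_of_crash_le {n : ℕ} (A : Adversary n) {j : Fin n} {k : ℕ}
    (h : A.crash j ≤ k) {l : ℕ} (y : Fin n) (hl : k ≤ l) : ¬ A.F l j y :=
  A.after_crash l j y (h.trans_lt (by exact_mod_cast Nat.lt_succ_of_le hl))

section Knowledge

variable {n t : ℕ} {A : Adversary n} {i : Fin n} {m : ℕ}

theorem sameView_refl (A : Adversary n) (i : Fin n) (m : ℕ) : sameView A A i m :=
  ⟨fun _ => Iff.rfl, fun _ _ => rfl, fun _ _ _ _ => Iff.rfl⟩

theorem Knows.holds {φ : Adversary n → ℕ → Prop} (hK : Knows t φ A i m) (hV : Valid t A)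
    (hA : A.Active i m) : φ A m :=
  hK A hV ⟨hA, hA, sameView_refl A i m⟩

theorem knows_existsVal_of_seen {q : Fin n} {v : Bool} (hs : Seen A (q, 0) (i, m))
    (hv : A.init q = v) : Knows t (existsVal v) A i m :=
  fun _ _ hL => ⟨q, hL.2.2.2.1 q hs ▸ hv⟩

noncomputable def Adversary.hideVal (A : Adversary n) (v : Bool) (i : Fin n) (m : ℕ) :
    Adversary n :=
  { A with init := fun q => if Seen A (q, 0) (i, m) then A.init q else !v }

theorem exists_seen_of_knows_existsVal {v : Bool} (hV : Valid t A) (hA : A.Active i m)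
    (hK : Knows t (existsVal v) A i m) : ∃ q, Seen A (q, 0) (i, m) ∧ A.init q = v := by
  have hseen : ∀ p q, Seen (A.hideVal v i m) p q ↔ Seen A p q :=
    fun _ _ => Seen.iff_of_F_iff (A := A.hideVal v i m) (B := A) fun _ _ _ => Iff.rfl
  have hL : sameLocal A (A.hideVal v i m) i m :=
    ⟨hA, hA, fun p => (hseen p _).symm, fun q hq => (if_pos hq).symm, fun _ _ _ _ => Iff.rfl⟩
  obtain ⟨q, hq⟩ := hK (A.hideVal v i m) hV hL
  by_cases hs : Seen A (q, 0) (i, m)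
  · exact ⟨q, hs, by simpa [Adversary.hideVal, hs] using hq⟩
  · simp [Adversary.hideVal, hs] at hq

theorem RevealedTime.of_sameView {B : Adversary n} {k : ℕ} (hv : sameView A B i m)
    (h : RevealedTime A k i m) : RevealedTime B k i m := by
  intro j
  rcases h j with hseen | ⟨i', l, hk, hsi', hnF⟩
  · exact Or.inl ((hv.1 _).mp hseen)
  · exact Or.inr ⟨i', l, hk, (hv.1 _).mp hsi', fun hF => hnF ((hv.2.2 l j i' hsi').mpr hF)⟩

/-- A process that knows `∃0` at `m` has seen a 0 through some node at the revealed time `k`;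
that node is either seen by `⟨i,m⟩`, which would give `i` the same 0, or known to have
crashed before `k ≤ m`, leaving no process active at `m` downstream of it. -/
theorem knows_notKnown0_of_revealedTime {k : ℕ} (hK0 : ¬ Knows t (existsVal false) A i m)
    (hrev : RevealedTime A k i m) (hkm : k ≤ m) : Knows t (notKnown0 t) A i m := by
  intro B hVB hL j hj hKj
  obtain ⟨q, hqj, hq⟩ := exists_seen_of_knows_existsVal hVB hj hKj
  obtain ⟨x, hqx, hxj⟩ := hqj.exists_mid (Nat.zero_le k) hkm
  rcases hrev.of_sameView hL.2.2 x with hxi | ⟨i', l, rfl, -, hnF⟩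
  · have hqi : Seen A (q, 0) (i, m) := (hL.2.2.1 _).mpr (hqx.trans hxi)
    exact hK0 (knows_existsVal_of_seen hqi (hL.2.2.2.1 q hqi ▸ hq))
  · have hcr : B.crash x ≤ (l + 1 : ℕ) := not_lt.mp fun h => hnF (B.before_crash l x i' h)
    obtain rfl : j = x := hxj.fst_eq_of_silent fun _ y => B.not_F_of_crash_le hcr y
    have : ((m : ℕ) : ℕ∞) < (l + 1 : ℕ) := lt_of_lt_of_le hj hcr
    norm_cast at this
    omega

theorem knows_notKnown0_of_knows_all1 (h : Knows t (all1 n) A i m) :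
    Knows t (notKnown0 t) A i m := by
  intro B hVB hL j hj hKj
  obtain ⟨q, hq⟩ := hKj.holds hVB hj
  simp [h B hVB hL q] at hq

/-- A process that `i` does not hear from in round `m` is revealed at time `m - 1` by its
missing message to `i` in round `m - 1`. -/
theorem revealedTime_of_senderSetRepeats (h2 : 2 ≤ m) (hrep : senderSetRepeats A i m) :
    RevealedTime A (m - 1) i m := by
  obtain ⟨m, rfl⟩ : ∃ l, m = l + 2 := ⟨m - 2, by omega⟩
  intro j
  by_cases hF : A.F (m + 1) j i
  · exact Or.inl (.step (.refl _) hF)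
  · exact Or.inr ⟨i, m, rfl, .self (.refl _), fun h => hF ((hrep j).mp h)⟩

end Knowledge

section Protocols

variable {n t : ℕ}

noncomputable def zeroOneRule (zero one : ℕ → Prop) : ℕ → Option Bool := fun m =>
  if zero m then some false else if one m then some true else none

theorem zeroOneRule_ne_none {zero one : ℕ → Prop} {m : ℕ} :
    zeroOneRule zero one m ≠ none ↔ zero m ∨ one m := by
  unfold zeroOneRule
  split_ifs <;> simp_all

theorem Opt0_eq (A : Adversary n) (i : Fin n) :
    Opt0 n t A i =
      runDec (zeroOneRule (Knows t (existsVal false) A i) (Knows t (notKnown0 t) A i)) :=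
  rfl

theorem P0opt_eq (A : Adversary n) (i : Fin n) :
    P0opt n t A i = runDec (zeroOneRule (Knows t (existsVal false) A i)
      fun m => Knows t (all1 n) A i m ∨ (2 ≤ m ∧ senderSetRepeats A i m)) := by
  unfold P0opt zeroOneRule
  congr 1 with m
  split_ifs <;> rfl

theorem runDec_eq_none_iff (s : ℕ → Option Bool) (m : ℕ) :
    runDec s m = none ↔ ∀ k ≤ m, s k = none := by
  induction m with
  | zero => simp [runDec]
  | succ m ih =>
      simp only [Nat.le_succ_iff, or_imp, forall_and, forall_eq, ← ih, runDec]
      cases runDec s m <;> simp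

theorem runDec_of_forall_lt {s : ℕ → Option Bool} {m : ℕ} (h : ∀ k < m, s k = none) :
    runDec s m = s m := by
  cases m with
  | zero => rfl
  | succ m =>
      have : runDec s m = none := (runDec_eq_none_iff s m).mpr fun k hk => h k (by omega)
      simp [runDec, this]

theorem runDec_ne_none_mono {s s' : ℕ → Option Bool} (h : ∀ k, s k ≠ none → s' k ≠ none)
    {m : ℕ} (hs : runDec s m ≠ none) : runDec s' m ≠ none := by
  simp only [ne_eq, runDec_eq_none_iff, not_forall] at hs ⊢
  obtain ⟨k, hk, hsk⟩ := hs
  exact ⟨k, hk, h k hsk⟩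

theorem runDec_zeroOneRule_decidesAt_true {zero one : ℕ → Prop} {m : ℕ}
    (hzero : ∀ k ≤ m, ¬ zero k) (hone : ∀ k < m, ¬ one k) (h : one m) :
    runDec (zeroOneRule zero one) m = some true ∧
      ∀ k < m, runDec (zeroOneRule zero one) k = none := by
  have hnone : ∀ k < m, zeroOneRule zero one k = none := fun k hk => by
    simpa [zeroOneRule, hzero k hk.le] using hone k hk
  refine ⟨?_, fun k hk => (runDec_eq_none_iff _ k).mpr fun l hl => hnone l (by omega)⟩
  rw [runDec_of_forall_lt hnone]
  simp [zeroOneRule, hzero m le_rfl, h]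

theorem Opt0_dominates_P0opt : Dominates t (Opt0 n t) (P0opt n t) := by
  intro A _ i m
  rw [Opt0_eq, P0opt_eq]
  refine runDec_ne_none_mono fun k hk => ?_
  rw [zeroOneRule_ne_none] at hk ⊢
  by_cases hK0 : Knows t (existsVal false) A i k
  · exact Or.inl hK0
  · refine Or.inr ?_
    rcases hk.resolve_left hK0 with h1 | ⟨h2, hrep⟩
    · exact knows_notKnown0_of_knows_all1 h1
    · exact knows_notKnown0_of_revealedTime hK0 (revealedTime_of_senderSetRepeats h2 hrep)
        (by omega)

end Protocols

namespace Adversary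

variable {n : ℕ}

def ofCrash (init : Fin n → Bool) (crash : Fin n → ℕ∞) (crash_pos : ∀ j, 1 ≤ crash j)
    (lastRound : Fin n → Fin n → Prop) : Adversary n where
  init := init
  F m j i := ((m + 1 : ℕ) : ℕ∞) < crash j ∨ (((m + 1 : ℕ) : ℕ∞) = crash j ∧ lastRound j i)
  crash := crash
  crash_pos := crash_pos
  before_crash _ _ _ h := Or.inl h
  after_crash _ _ _ h := by
    rintro (h' | ⟨h', -⟩)
    exacts [lt_asymm h h', h.ne' h']

end Adversary

theorem sameView_of_extra_edge {n : ℕ} {A B : Adversary n} {p x i : Fin n} {m : ℕ}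
    (hinit : ∀ q ≠ p, A.init q = B.init q)
    (hF : ∀ k j j', ¬(k = 0 ∧ j = p ∧ j' = x) → (A.F k j j' ↔ B.F k j j'))
    (hsilent : ∀ l y, ¬ A.F l p y) (hnb : ¬ Seen B (x, 1) (i, m)) (hpi : p ≠ i) :
    sameView A B i m := by
  have hAB : ∀ k j j', A.F k j j' → B.F k j j' := by
    intro k j j' h
    by_cases hc : k = 0 ∧ j = p ∧ j' = x
    · exact absurd (hc.2.1 ▸ h) (hsilent k j')
    · exact (hF k j j' hc).mp h
  have hBA : ∀ {q r}, Seen B q r → ¬ Seen B (x, 1) r → Seen A q r := by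
    intro q r h
    induction h with
    | refl => exact fun _ => .refl _
    | self _ ih => exact fun hn => .self (ih fun hs => hn (.self hs))
    | @step j i' m' h hFe ih =>
        intro hn
        by_cases hc : m' = 0 ∧ j = p ∧ i' = x
        · obtain ⟨rfl, -, rfl⟩ := hc
          exact absurd (.refl _) hn
        · exact .step (ih fun hs => hn (.step hs hFe)) ((hF _ _ _ hc).mpr hFe)
  refine ⟨fun q => ⟨Seen.mono hAB, fun h => hBA h hnb⟩, fun j hs => ?_, fun k j j' hs => ?_⟩
  · refine hinit j fun hj => hpi ?_
    subst hj
    exact (hs.fst_eq_of_silent fun l y _ => hsilent l y).symm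
  · by_cases hc : k = 0 ∧ j = p ∧ j' = x
    · obtain ⟨rfl, -, rfl⟩ := hc
      exact absurd (Seen.mono hAB hs) hnb
    · exact hF k j j' hc

section CrashSchedule

variable {n t : ℕ}

/-- Processes are numbered from `0`: process `v` is the paper's process `v + 1`. -/
noncomputable def crashTime (t v : ℕ) : ℕ∞ :=
  if t ≤ v then ⊤ else if v = 0 then 1 else if v ≤ 2 then 2 else (v + 1 : ℕ)

theorem one_le_crashTime (t v : ℕ) : 1 ≤ crashTime t v := by
  unfold crashTime
  split_ifs <;> first | exact le_top | norm_num

theorem crashTime_eq_top_iff {v : ℕ} : crashTime t v = ⊤ ↔ t ≤ v := by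
  unfold crashTime
  split_ifs with h <;> simp [h]

theorem coe_lt_crashTime {a v : ℕ} : (a : ℕ∞) < crashTime t v ↔
    t ≤ v ∨ v < t ∧ ((v = 0 ∧ a < 1) ∨ (1 ≤ v ∧ v ≤ 2 ∧ a < 2) ∨ (3 ≤ v ∧ a < v + 1)) := by
  unfold crashTime
  split_ifs with h₁ h₂ h₃
  · simp [h₁]
  · rw [← Nat.cast_one, Nat.cast_lt]; omega
  · rw [← Nat.cast_ofNat, Nat.cast_lt]; omega
  · rw [Nat.cast_lt]; omega

theorem coe_eq_crashTime {a v : ℕ} : (a : ℕ∞) = crashTime t v ↔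
    v < t ∧ ((v = 0 ∧ a = 1) ∨ (1 ≤ v ∧ v ≤ 2 ∧ a = 2) ∨ (3 ≤ v ∧ a = v + 1)) := by
  unfold crashTime
  split_ifs with h₁ h₂ h₃
  · simp; omega
  · rw [← Nat.cast_one, Nat.cast_inj]; omega
  · rw [← Nat.cast_ofNat, Nat.cast_inj]; omega
  · rw [Nat.cast_inj]; omega

noncomputable def crashScheduleAdv (n t : ℕ) (init : Fin n → Bool)
    (lastRound : Fin n → Fin n → Prop) : Adversary n :=
  Adversary.ofCrash init (fun j => crashTime t j) (fun j => one_le_crashTime t j) lastRound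

variable {init : Fin n → Bool} {lastRound : Fin n → Fin n → Prop}

theorem crashScheduleAdv_F {m : ℕ} {j i : Fin n} :
    (crashScheduleAdv n t init lastRound).F m j i ↔
    t ≤ j.val ∨ j.val < t ∧ ((j.val = 0 ∧ m = 0 ∧ lastRound j i) ∨
      (1 ≤ j.val ∧ j.val ≤ 2 ∧ (m = 0 ∨ m = 1 ∧ lastRound j i)) ∨
      (3 ≤ j.val ∧ (m < j.val ∨ m = j.val ∧ lastRound j i))) := by
  change _ ∨ _ ↔ _
  rw [coe_lt_crashTime, coe_eq_crashTime]
  by_cases h : lastRound j i <;> simp only [h, and_true, and_false, or_false, false_or]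
    <;> omega

theorem crashScheduleAdv_faulty_iff {j : Fin n} :
    (crashScheduleAdv n t init lastRound).Faulty j ↔ j.val < t :=
  crashTime_eq_top_iff.not.trans not_le

theorem crashScheduleAdv_active_iff {j : Fin n} {m : ℕ} :
    (crashScheduleAdv n t init lastRound).Active j m ↔
    t ≤ j.val ∨ j.val < t ∧ ((j.val = 0 ∧ m < 1) ∨ (1 ≤ j.val ∧ j.val ≤ 2 ∧ m < 2) ∨
      (3 ≤ j.val ∧ m < j.val + 1)) :=
  coe_lt_crashTime

theorem crashScheduleAdv_numFaults (hn : t ≤ n) :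
    (crashScheduleAdv n t init lastRound).numFaults = t := by
  have : {j | (crashScheduleAdv n t init lastRound).Faulty j} =
      ↑({j : Fin n | j.val < t} : Finset (Fin n)) := by
    ext j
    simp [crashScheduleAdv_faulty_iff]
  rw [Adversary.numFaults, this, Set.ncard_coe_finset, Fin.card_filter_val_lt, min_eq_right hn]

theorem crashScheduleAdv_valid (htn : t ≤ n):
    Valid t (crashScheduleAdv n t init lastRound) :=
  (crashScheduleAdv_numFaults htn).le

end CrashSchedule

section BeatingAdversary

variable {n t : ℕ} {i : Fin n}

def roundTwoDelivery (n : ℕ) (j i : Fin n) : Prop :=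
  (j.val = 1 ∧ i.val = n - 1) ∨ (j.val = 2 ∧ i.val ≠ n - 1)

noncomputable def beatingAdv (n t : ℕ) : Adversary n :=
  crashScheduleAdv n t (fun _ => true) (roundTwoDelivery n)

noncomputable def hiddenZeroAdv (n t : ℕ) (x : Fin n) : Adversary n :=
  crashScheduleAdv n t (fun j => j.val != 0)
    fun j i => roundTwoDelivery n j i ∨ (j.val = 0 ∧ i = x)

theorem beatingAdv_init (j : Fin n) : (beatingAdv n t).init j = true := rfl

theorem hiddenZeroAdv_init {x p : Fin n} (hp : p.val = 0) :
    (hiddenZeroAdv n t x).init p = false := by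
  simp [hiddenZeroAdv, crashScheduleAdv, Adversary.ofCrash, hp]

theorem beatingAdv_sameLocal_hiddenZeroAdv (ht : 0 < t) {x : Fin n} (hi : t ≤ i.val) {m : ℕ}
    (hnb : ¬ Seen (hiddenZeroAdv n t x) (x, 1) (i, m)) :
    sameLocal (beatingAdv n t) (hiddenZeroAdv n t x) i m := by
  refine ⟨crashScheduleAdv_active_iff.mpr (Or.inl hi), crashScheduleAdv_active_iff.mpr (Or.inl hi),
    sameView_of_extra_edge (p := ⟨0, by omega⟩) (fun q hq => ?_) (fun k j j' hc => ?_)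
      (fun l y => ?_) hnb ?_⟩
  · simp only [ne_eq, Fin.ext_iff] at hq
    simp [beatingAdv, hiddenZeroAdv, crashScheduleAdv, Adversary.ofCrash, hq]
  · simp only [Fin.ext_iff] at hc
    simp only [beatingAdv, hiddenZeroAdv, crashScheduleAdv_F, roundTwoDelivery, Fin.ext_iff]
    omega
  · simp only [beatingAdv, crashScheduleAdv_F, roundTwoDelivery]
    omega
  · simp only [ne_eq, Fin.ext_iff]
    omega

theorem beatingAdv_not_knows_notKnown0_of_hiddenZero (ht : 0 < t) (htn : t ≤ n)
    {x j p : Fin n} (hi : t ≤ i.val) (hp : p.val = 0) {m : ℕ}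
    (hnb : ¬ Seen (hiddenZeroAdv n t x) (x, 1) (i, m)) (hj : (hiddenZeroAdv n t x).Active j m)
    (hseen : Seen (hiddenZeroAdv n t x) (p, 0) (j, m)) :
    ¬ Knows t (notKnown0 t) (beatingAdv n t) i m := fun h =>
  h _ (crashScheduleAdv_valid htn) (beatingAdv_sameLocal_hiddenZeroAdv ht hi hnb) j hj
    (knows_existsVal_of_seen hseen (hiddenZeroAdv_init hp))


theorem beatingAdv_not_knows_existsVal_false (htn : t ≤ n) (hi : t ≤ i.val) (m : ℕ) :
    ¬ Knows t (existsVal false) (beatingAdv n t) i m := fun h => by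
  obtain ⟨j, hj⟩ :=
    h.holds (crashScheduleAdv_valid htn) (crashScheduleAdv_active_iff.mpr (Or.inl hi))
  exact Bool.false_ne_true (hj.symm.trans (beatingAdv_init j))

theorem beatingAdv_not_knows_all1 (ht : 0 < t) (htn : t ≤ n) (hi : t ≤ i.val) (m : ℕ) :
    ¬ Knows t (all1 n) (beatingAdv n t) i m := by
  intro h
  let p : Fin n := ⟨0, by omega⟩
  have hnb : ¬ Seen (hiddenZeroAdv n t p) (p, 1) (i, m) := fun hs => by
    have hip := hs.fst_eq_of_silent fun l y hl => by
      simp only [hiddenZeroAdv, crashScheduleAdv_F, roundTwoDelivery, p]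
      omega
    simp only [p, Fin.ext_iff] at hip
    omega
  have : (hiddenZeroAdv n t p).init p = true :=
    h _ (crashScheduleAdv_valid htn) (beatingAdv_sameLocal_hiddenZeroAdv ht hi hnb) p
  rw [hiddenZeroAdv_init rfl] at this
  cases this

/-- In each of the first three rounds there is a run, indistinguishable to `i`, in which the
0 of process `0` reaches a process that is still active without reaching `i`. -/
theorem beatingAdv_not_knows_notKnown0 (h3 : 3 ≤ t) (hn : t + 2 ≤ n) (hi : t ≤ i.val) {m : ℕ}
    (hm : m < 3) : ¬ Knows t (notKnown0 t) (beatingAdv n t) i m := by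
  have proc : ∀ v < n, ∃ p : Fin n, p.val = v := fun v hv => ⟨⟨v, hv⟩, rfl⟩
  obtain ⟨p₀, hp₀⟩ := proc 0 (by omega)
  obtain ⟨p₁, hp₁⟩ := proc 1 (by omega)
  have hF₀ : ∀ x, (hiddenZeroAdv n t x).F 0 p₀ x := fun x => by
    simp only [hiddenZeroAdv, crashScheduleAdv_F, roundTwoDelivery, true_and, and_true]
    omega
  have hnb : ∀ {x : Fin n}, x ≠ i → ¬ (hiddenZeroAdv n t x).F 1 x i →
      ¬ Seen (hiddenZeroAdv n t x) (x, 1) (i, 2) := fun hxi hF hs =>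
    (hs.eq_or_F_of_succ).elim hxi hF
  have hne : ∀ {p : Fin n}, p.val < t → p ≠ i := fun hp h => by omega
  interval_cases m
  · refine beatingAdv_not_knows_notKnown0_of_hiddenZero (x := p₀) (j := p₀)
      (by omega) (by omega) hi hp₀ (fun hs => absurd hs.snd_le (by simp)) ?_ (.refl _)
    exact crashScheduleAdv_active_iff.mpr (by omega)
  · refine beatingAdv_not_knows_notKnown0_of_hiddenZero (x := p₁) (j := p₁)
      (by omega) (by omega) hi hp₀
      (fun hs => hne (show p₁.val < t by omega) (Prod.ext_iff.mp (hs.eq_of_snd_eq rfl)).1) ?_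
      (.step (.refl _) (hF₀ _))
    exact crashScheduleAdv_active_iff.mpr (by omega)
  · by_cases hin : i.val = n - 1
    · obtain ⟨p₂, hp₂⟩ := proc 2 (by omega)
      obtain ⟨p₃, hp₃⟩ := proc 3 (by omega)
      refine beatingAdv_not_knows_notKnown0_of_hiddenZero (x := p₂) (j := p₃)
        (by omega) (by omega) hi hp₀ (hnb (hne (by omega)) ?_) ?_
        (.step (.step (.refl _) (hF₀ _)) ?_)
      · simp only [hiddenZeroAdv, crashScheduleAdv_F, roundTwoDelivery, Fin.ext_iff, true_and]
        omega
      · exact crashScheduleAdv_active_iff.mpr (by omega)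
      · simp only [hiddenZeroAdv, crashScheduleAdv_F, roundTwoDelivery, Fin.ext_iff, true_and]
        omega
    · obtain ⟨q, hq⟩ := proc (n - 1) (by omega)
      refine beatingAdv_not_knows_notKnown0_of_hiddenZero (x := p₁) (j := q)
        (by omega) (by omega) hi hp₀ (hnb (hne (by omega)) ?_) ?_
        (.step (.step (.refl _) (hF₀ _)) ?_)
      · simp only [hiddenZeroAdv, crashScheduleAdv_F, roundTwoDelivery, Fin.ext_iff, true_and]
        omega
      · exact crashScheduleAdv_active_iff.mpr (by omega)
      · simp only [hiddenZeroAdv, crashScheduleAdv_F, roundTwoDelivery, Fin.ext_iff, true_and]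
        omega

/-- A process `j < 3` is revealed by a process that `j` failed to reach in round 2 but that
reaches `i` in round 3. -/
theorem beatingAdv_revealedTime_two (h3 : 3 ≤ t) (hn : t + 2 ≤ n) :
    RevealedTime (beatingAdv n t) 2 i 3 := by
  intro j
  by_cases hj : 3 ≤ j.val
  · refine Or.inl (.step (.refl _) ?_)
    simp only [beatingAdv, crashScheduleAdv_F]
    omega
  · obtain ⟨q, hq⟩ : ∃ q : Fin n, q.val = if j.val = 2 then n - 1 else 3 :=
      ⟨⟨if j.val = 2 then n - 1 else 3, by split_ifs <;> omega⟩, rfl⟩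
    refine Or.inr ⟨q, 1, rfl, .step (.refl _) ?_, ?_⟩ <;>
      simp only [beatingAdv, crashScheduleAdv_F, roundTwoDelivery] <;> split_ifs at hq <;> omega

theorem beatingAdv_senderSetRepeats (h3 : 3 ≤ t) (i : Fin n) :
    senderSetRepeats (beatingAdv n t) i (t + 1) := by
  intro j
  simp only [beatingAdv, crashScheduleAdv_F, roundTwoDelivery]
  constructor <;> intro h <;> omega

/-- `i` hears from `j` in round `m - 1` but not in round `m`. -/
theorem beatingAdv_not_senderSetRepeats (h3 : 3 ≤ t) (hn : t + 2 ≤ n) (i : Fin n) {m : ℕ}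
    (h2 : 2 ≤ m) (hmt : m ≤ t) : ¬ senderSetRepeats (beatingAdv n t) i m := by
  obtain ⟨j, hj⟩ : ∃ j : Fin n,
      j.val = if 4 ≤ m then m - 1 else if (m = 2 ↔ i.val = n - 1) then 2 else 1 :=
    ⟨⟨if 4 ≤ m then m - 1 else if (m = 2 ↔ i.val = n - 1) then 2 else 1, by split_ifs <;> omega⟩,
      rfl⟩
  intro hrep
  have := hrep j
  simp only [beatingAdv, crashScheduleAdv_F, roundTwoDelivery] at this
  split_ifs at hj <;> omega

theorem beatingAdv_Opt0_decidesAt (h3 : 3 ≤ t) (hn : t + 2 ≤ n) (hi : t ≤ i.val) :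
    DecidesAt (Opt0 n t) (beatingAdv n t) i 3 true := by
  have hK0 := beatingAdv_not_knows_existsVal_false (by omega) hi
  exact runDec_zeroOneRule_decidesAt_true (fun k _ => hK0 k)
    (fun k hk => beatingAdv_not_knows_notKnown0 h3 hn hi hk)
    (knows_notKnown0_of_revealedTime (hK0 3) (beatingAdv_revealedTime_two h3 hn) (by omega))

theorem beatingAdv_P0opt_decidesAt (h3 : 3 ≤ t) (hn : t + 2 ≤ n) (hi : t ≤ i.val) :
    DecidesAt (P0opt n t) (beatingAdv n t) i (t + 1) true := by
  rw [DecidesAt, P0opt_eq]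
  refine runDec_zeroOneRule_decidesAt_true
    (fun k _ => beatingAdv_not_knows_existsVal_false (by omega) hi k)
    (fun k hk => ?_) (Or.inr ⟨by omega, beatingAdv_senderSetRepeats h3 i⟩)
  rintro (h | ⟨h2, hrep⟩)
  · exact beatingAdv_not_knows_all1 (by omega) (by omega) hi k h
  · exact beatingAdv_not_senderSetRepeats h3 hn i h2 (by omega) hrep

end BeatingAdversary

/-- If `3 ≤ t ≤ n-2` then `Opt₀` strictly dominates `P0_opt` (so `P0_opt` is beatable);
moreover there is an adversary with exactly `t` crashes on which every correct process
decides 1 after 3 rounds in `Opt₀` but only after `t+1` rounds in `P0_opt`. -/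
theorem opt0_beats_P0opt (n t : ℕ) (h3 : 3 ≤ t) (hn : t + 2 ≤ n) :
    StrictlyDominates t (Opt0 n t) (P0opt n t) ∧
    ∃ A : Adversary n, Valid t A ∧ A.numFaults = t ∧
      ∀ i : Fin n, ¬ A.Faulty i →
        DecidesAt (Opt0 n t) A i 3 true ∧ DecidesAt (P0opt n t) A i (t + 1) true := by
  have decides (i : Fin n) (hi : ¬ (beatingAdv n t).Faulty i) :
      DecidesAt (Opt0 n t) (beatingAdv n t) i 3 true ∧
        DecidesAt (P0opt n t) (beatingAdv n t) i (t + 1) true := by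
    have hi : t ≤ i.val := not_lt.mp (crashScheduleAdv_faulty_iff.not.mp hi)
    exact ⟨beatingAdv_Opt0_decidesAt h3 hn hi, beatingAdv_P0opt_decidesAt h3 hn hi⟩
  refine ⟨⟨Opt0_dominates_P0opt, fun hdom => ?_⟩, beatingAdv n t,
    crashScheduleAdv_valid (by omega), crashScheduleAdv_numFaults (by omega), decides⟩
  obtain ⟨q, hq⟩ : ∃ q : Fin n, q.val = n - 1 := ⟨⟨n - 1, by omega⟩, rfl⟩
  obtain ⟨hOpt0, hP0opt⟩ := decides q (crashScheduleAdv_faulty_iff.not.mpr (by omega))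
  exact hdom _ (crashScheduleAdv_valid (by omega)) q 3
    (ne_of_eq_of_ne hOpt0.1 (Option.some_ne_none true)) (hP0opt.2 3 (by omega))
end

section
/- Assume n > 2 and t > 0. Let Q be a consensus protocol dominating Opt_Maj and r = Q[α] a run. If at time 1 process i knows Maj = v (i.e., i has seen at least n/2 [for v=0], resp. strictly more than n/2 [for v=1], time-0 nodes with initial value v), then i decides v at or before time 1 in r. -/
attribute [local instance] Classical.propDecidable

open Adversary

/-!
Whether `i` knows `Maj = v` at time 1 depends only on how many values `v` it has received, and
domination forces `Q` to decide whenever `Opt_Maj` does. In a failure-free run whose values meet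
the majority bound every process decides `v`, by downward induction on the number of values `v`:
validity settles the case where all values are `v`, and otherwise one value is flipped to `v`
through a chain of pairwise indistinguishable runs linked by agreement. A general run is reduced
to a failure-free one by letting the processes `i` has not heard from crash visibly to everyone
except `i`.
-/

open Finset

namespace Adversary

variable {n : ℕ}

/-- Processes in `C` crash in round 1, delivering their round-1 message exactly to the `i`
with `R j i`; all other processes are correct. -/
noncomputable def crashAtOne (x : Fin n → Bool) (C : Finset (Fin n))
    (R : Fin n → Fin n → Prop) : Adversary n where
  init := x
  F m j i := j ∈ C → m = 0 ∧ R j i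
  crash j := if j ∈ C then 1 else ⊤
  crash_pos j := by split <;> simp
  before_crash m j i h := by
    intro hj
    rw [if_pos hj] at h
    exact absurd (by exact_mod_cast h : m + 1 < 1) (by omega)
  after_crash m j i h := by
    split at h
    · intro hF
      have : 1 < m + 1 := by exact_mod_cast h
      have := (hF ‹_›).1
      omega
    · simp at h

noncomputable abbrev failureFree (x : Fin n → Bool) : Adversary n :=
  crashAtOne x ∅ fun _ _ => True

variable {x : Fin n → Bool} {C : Finset (Fin n)} {R : Fin n → Fin n → Prop}

@[simp] lemma crashAtOne_init : (crashAtOne x C R).init = x := rfl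

@[simp] lemma crashAtOne_F_zero {j i : Fin n} :
    (crashAtOne x C R).F 0 j i ↔ (j ∈ C → R j i) := by
  simp [crashAtOne]

lemma crashAtOne_faulty {j : Fin n} : (crashAtOne x C R).Faulty j ↔ j ∈ C := by
  simp only [Faulty, crashAtOne]
  split <;> simp [*]

lemma crashAtOne_active {i : Fin n} (hi : i ∉ C) (m : ℕ) : (crashAtOne x C R).Active i m := by
  simp [Active, crashAtOne, hi]

lemma valid_crashAtOne {t : ℕ} (hC : #C ≤ t) : Valid t (crashAtOne x C R) := by
  simp only [Valid, numFaults, crashAtOne_faulty]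
  simpa using hC

lemma not_faulty_crashAtOne {i : Fin n} (hi : i ∉ C) : ¬ (crashAtOne x C R).Faulty i :=
  crashAtOne_faulty.not.2 hi

lemma card_le_numFaults {A : Adversary n} (h : ∀ j ∈ C, A.Faulty j) : #C ≤ A.numFaults := by
  rw [numFaults, ← Set.ncard_coe_finset]
  exact Set.ncard_le_ncard h

lemma faulty_of_not_F {A : Adversary n} {m : ℕ} {j i : Fin n} (h : ¬ A.F m j i) : A.Faulty j :=
  fun htop => h (A.before_crash m j i (by simp [htop]))

lemma Active.F_zero {A : Adversary n} {j : Fin n} (h : A.Active j 1) (i : Fin n) : A.F 0 j i :=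
  A.before_crash 0 j i (by exact_mod_cast h)

end Adversary

section TimeOne

variable {n : ℕ} {A B : Adversary n} {p : Fin n × ℕ} {i j : Fin n}

lemma Seen.eq_of_time_zero (h : Seen A p (j, 0)) : p = (j, 0) := by
  cases h
  rfl

lemma Seen.cases_time_one (h : Seen A p (i, 1)) :
    p = (i, 1) ∨ p = (i, 0) ∨ ∃ j, p = (j, 0) ∧ A.F 0 j i := by
  cases h with
  | refl => exact Or.inl rfl
  | self h => exact Or.inr (Or.inl h.eq_of_time_zero)
  | step h hF => exact Or.inr (Or.inr ⟨_, h.eq_of_time_zero, hF⟩)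

lemma seen_zero_one_iff (hi : A.Active i 1) : Seen A (j, 0) (i, 1) ↔ A.F 0 j i := by
  refine ⟨fun h => ?_, fun hF => Seen.step (Seen.refl _) hF⟩
  rcases h.cases_time_one with h | h | ⟨j', h, hF⟩
  · simp at h
  · obtain rfl : j = i := congrArg Prod.fst h
    exact hi.F_zero _
  · obtain rfl : j = j' := congrArg Prod.fst h
    exact hF

lemma sameLocal_one (hA : A.Active i 1) (hB : B.Active i 1)
    (hF : ∀ j, A.F 0 j i ↔ B.F 0 j i) (hinit : ∀ j, A.F 0 j i → A.init j = B.init j) :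
    sameLocal A B i 1 := by
  refine ⟨hA, hB, fun p => ⟨fun h => ?_, fun h => ?_⟩,
    fun j h => hinit j ((seen_zero_one_iff hA).1 h), fun k j j' h => ?_⟩
  · rcases h.cases_time_one with rfl | rfl | ⟨j, rfl, hj⟩
    · exact Seen.refl _
    · exact Seen.self (Seen.refl _)
    · exact Seen.step (Seen.refl _) ((hF j).1 hj)
  · rcases h.cases_time_one with rfl | rfl | ⟨j, rfl, hj⟩
    · exact Seen.refl _
    · exact Seen.self (Seen.refl _)
    · exact Seen.step (Seen.refl _) ((hF j).2 hj)
  · rcases h.cases_time_one with h | h | ⟨_, h, -⟩ <;>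
      simp only [Prod.mk.injEq, Nat.add_one_ne_zero, and_false] at h
    obtain ⟨rfl, hk⟩ := h
    obtain rfl : k = 0 := by omega
    exact hF j

lemma sameLocal_crashAtOne {x x' : Fin n → Bool} {C C' : Finset (Fin n)}
    {R R' : Fin n → Fin n → Prop} (hi : i ∉ C) (hi' : i ∉ C')
    (hF : ∀ j, (j ∈ C → R j i) ↔ (j ∈ C' → R' j i))
    (hx : ∀ j, (j ∈ C → R j i) → x j = x' j) :
    sameLocal (crashAtOne x C R) (crashAtOne x' C' R') i 1 :=
  sameLocal_one (crashAtOne_active hi 1) (crashAtOne_active hi' 1)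
    (by simpa using hF) (by simpa using hx)

end TimeOne

section Majority

variable {n : ℕ}

noncomputable def valCount (v : Bool) (x : Fin n → Bool) : ℕ := #{j | x j = v}

noncomputable def seenCount (v : Bool) (A : Adversary n) (i : Fin n) : ℕ :=
  #{j | Seen A (j, 0) (i, 1) ∧ A.init j = v}

def MajBound (n : ℕ) (v : Bool) (c : ℕ) : Prop := if v then n < 2 * c else n ≤ 2 * c

lemma MajBound.mono {v : Bool} {c c' : ℕ} (h : MajBound n v c) (hc : c ≤ c') :
    MajBound n v c' := by
  cases v <;> simp only [MajBound, Bool.false_eq_true, if_true, if_false] at h ⊢ <;> omega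

lemma MajBound.two_le {v : Bool} {c : ℕ} (hn : 2 < n) (h : MajBound n v c) : 2 ≤ c := by
  cases v <;> simp only [MajBound, Bool.false_eq_true, if_true, if_false] at h <;> omega

lemma majFact_iff {v : Bool} {A : Adversary n} {m : ℕ} :
    (if v then Maj1 n else Maj0 n) A m ↔ MajBound n v (valCount v A.init) := by
  cases v <;> rfl

lemma valCount_le (v : Bool) (x : Fin n → Bool) : valCount v x ≤ n :=
  (card_filter_le _ _).trans_eq (card_fin n)

lemma valCount_update_of_ne {x : Fin n → Bool} {v : Bool} {j : Fin n} (hj : x j ≠ v) :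
    valCount v (Function.update x j v) = valCount v x + 1 := by
  rw [valCount, valCount, ← card_insert_of_notMem (s := {k | x k = v}) (by simpa using hj)]
  congr 1
  ext k
  by_cases hk : k = j <;> simp [hk]

lemma valCount_le_seenCount_crashAtOne {x : Fin n → Bool} {C : Finset (Fin n)}
    {R : Fin n → Fin n → Prop} {v : Bool} {i : Fin n} (hi : i ∉ C)
    (h : ∀ j ∈ C, x j = v → R j i) : valCount v x ≤ seenCount v (crashAtOne x C R) i := by
  refine card_le_card fun j hj => ?_
  simp only [mem_filter, mem_univ, true_and] at hj ⊢
  rw [seen_zero_one_iff (crashAtOne_active hi 1), crashAtOne_F_zero]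
  exact ⟨fun hjC => h j hjC hj, hj⟩

variable {t : ℕ} {A : Adversary n} {i : Fin n} {v : Bool}

lemma knows_maj_of_majBound (h : MajBound n v (seenCount v A i)) :
    Knows t (if v then Maj1 n else Maj0 n) A i 1 := by
  rintro B - ⟨-, -, -, hinit, -⟩
  refine majFact_iff.2 (h.mono (card_le_card fun j hj => ?_))
  simp only [mem_filter, mem_univ, true_and] at hj ⊢
  rw [← hinit j hj.1]
  exact hj.2

/-- Filling every value `i` has not seen with `!v` shows that only the seen values count. -/
lemma majBound_of_knows_maj (hA : Valid t A) (hi : A.Active i 1)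
    (h : Knows t (if v then Maj1 n else Maj0 n) A i 1) : MajBound n v (seenCount v A i) := by
  let B : Adversary n := { A with init := fun j => if Seen A (j, 0) (i, 1) then A.init j else !v }
  have hAB : sameLocal A B i 1 :=
    sameLocal_one hi hi (fun _ => Iff.rfl) fun j hj => by
      simp [B, (seen_zero_one_iff hi).2 hj]
  have hcount : valCount v B.init = seenCount v A i := by
    refine congrArg card (filter_congr fun j _ => ?_)
    by_cases hj : Seen A (j, 0) (i, 1) <;> simp [B, hj]
  exact hcount ▸ majFact_iff.1 (h B hA hAB)

end Majority

lemma runDec_ne_none {step : ℕ → Option Bool} {m : ℕ} (h : step m ≠ none) :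
    runDec step m ≠ none := by
  cases m with
  | zero => exact h
  | succ m => cases hm : runDec step m <;> simp [runDec, hm, h]

section Protocol

variable {n t : ℕ} {Q : ProtoDec n} {A : Adversary n} {i j : Fin n} {v : Bool}

lemma optMaj_ne_none_of_knows {m : ℕ} (h : Knows t (if v then Maj1 n else Maj0 n) A i m) :
    OptMaj n t A i m ≠ none := by
  refine runDec_ne_none ?_
  cases v <;> split_ifs <;> simp_all

lemma decided_of_majBound (hdom : Dominates t Q (OptMaj n t)) (hA : Valid t A)
    (h : MajBound n v (seenCount v A i)) : Q A i 1 ≠ none :=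
  hdom A hA i 1 (optMaj_ne_none_of_knows (knows_maj_of_majBound h))

lemma eq_some_of_agreement (hC : Agreement t Q) (hA : Valid t A) (hi : ¬ A.Faulty i)
    (hj : ¬ A.Faulty j) {m m' : ℕ} (hdec : Q A i m ≠ none) (hjv : Q A j m' = some v) :
    Q A i m = some v := by
  obtain ⟨w, hw⟩ := Option.ne_none_iff_exists'.1 hdec
  rw [hw, hC A hA i j m m' w v hi hj hw hjv]

end Protocol

section Dominating

variable {n t : ℕ} {Q : ProtoDec n} {v : Bool}

lemma failureFree_decided (hdom : Dominates t Q (OptMaj n t)) {x : Fin n → Bool}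
    (hmaj : MajBound n v (valCount v x)) (i : Fin n) : Q (failureFree x) i 1 ≠ none :=
  decided_of_majBound hdom (valid_crashAtOne (by simp))
    (hmaj.mono (valCount_le_seenCount_crashAtOne (by simp) (by simp)))

/-- `j₀` crashes reaching only `i`, so a third process `k` cannot tell whether `x j₀` was
flipped to `v`; agreement carries `i`'s decision in the flipped run over to `k`, and from `k`
back to `i`. -/
lemma failureFree_decides_of_update (hn : 2 < n) (ht : 0 < t) (hQ : IsProtocol t Q)
    (hC : Agreement t Q) (hdom : Dominates t Q (OptMaj n t)) {x : Fin n → Bool}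
    {i j₀ : Fin n} (hij : i ≠ j₀) (hx : x j₀ ≠ v) (hmaj : MajBound n v (valCount v x))
    (hupd : Q (failureFree (Function.update x j₀ v)) i 1 = some v) :
    Q (failureFree x) i 1 = some v := by
  obtain ⟨k, hki, hkj⟩ := Fin.exists_ne_and_ne_of_two_lt i j₀ hn
  let B := crashAtOne x {j₀} fun _ r => r = i
  let B' := crashAtOne (Function.update x j₀ v) {j₀} fun _ r => r = i
  have hB : Valid t B := valid_crashAtOne ((card_singleton j₀).trans_le ht)
  have hB' : Valid t B' := valid_crashAtOne ((card_singleton j₀).trans_le ht)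
  have hi : i ∉ ({j₀} : Finset (Fin n)) := by simpa using hij
  have hk : k ∉ ({j₀} : Finset (Fin n)) := by simpa using hkj
  have hiB : Q (failureFree x) i 1 = Q B i 1 :=
    hQ.2 _ _ i 1 (valid_crashAtOne (by simp)) hB
      (sameLocal_crashAtOne (by simp) hi (by simp) (by simp))
  have hiB' : Q B' i 1 = some v :=
    (hQ.2 _ _ i 1 hB' (valid_crashAtOne (by simp))
      (sameLocal_crashAtOne hi (by simp) (by simp) (by simp))).trans hupd
  have hkB : Q B k 1 = Q B' k 1 :=
    hQ.2 _ _ k 1 hB hB' <| sameLocal_crashAtOne hk hk (fun _ => Iff.rfl) fun j hj => by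
      rw [Function.update_of_ne fun h => hki (hj (mem_singleton.2 h))]
  have hkdec : Q B k 1 ≠ none :=
    decided_of_majBound hdom hB <| hmaj.mono <| valCount_le_seenCount_crashAtOne hk
      fun j hj hxj => absurd ((mem_singleton.1 hj) ▸ hxj) hx
  have hkv : Q B k 1 = some v :=
    hkB ▸ eq_some_of_agreement hC hB' (not_faulty_crashAtOne hk) (not_faulty_crashAtOne hi)
      (hkB ▸ hkdec) hiB'
  rw [hiB]
  exact eq_some_of_agreement hC hB (not_faulty_crashAtOne hi) (not_faulty_crashAtOne hk)
    (hiB ▸ failureFree_decided hdom hmaj i) hkv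

theorem failureFree_decides (hn : 2 < n) (ht : 0 < t) (hQ : IsProtocol t Q)
    (hV : Validity t Q) (hC : Agreement t Q) (hdom : Dominates t Q (OptMaj n t))
    (x : Fin n → Bool) (hmaj : MajBound n v (valCount v x)) (i : Fin n) :
    Q (failureFree x) i 1 = some v := by
  have hvalid : Valid t (failureFree x) := valid_crashAtOne (by simp)
  by_cases hall : ∀ j, x j = v
  · obtain ⟨w, hw⟩ := Option.ne_none_iff_exists'.1 (failureFree_decided hdom hmaj i)
    rw [hw, hV _ hvalid v hall i 1 w (not_faulty_crashAtOne (by simp)) hw]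
  obtain ⟨j₀, hj₀⟩ := not_forall.1 hall
  have hcount := valCount_update_of_ne hj₀
  obtain ⟨i₀, hi₀, -⟩ := Fin.exists_ne_and_ne_of_two_lt j₀ j₀ hn
  have hi₀v : Q (failureFree x) i₀ 1 = some v :=
    failureFree_decides_of_update hn ht hQ hC hdom hi₀ hj₀ hmaj
      (failureFree_decides hn ht hQ hV hC hdom _ (hmaj.mono (by omega)) i₀)
  exact eq_some_of_agreement hC hvalid (not_faulty_crashAtOne (by simp))
    (not_faulty_crashAtOne (by simp)) (failureFree_decided hdom hmaj i) hi₀v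
termination_by n - valCount v x
decreasing_by
  have := valCount_le v (Function.update x j₀ v)
  omega

/-- The processes `i` has not heard from crash in round 1, reaching everyone except `i`,
and their values are replaced by `v`: `i` cannot tell this run from `A`, while a correct
process `i'` seen by `i` now sees a failure-free run with at least as many values `v`. -/
theorem decides_of_majBound (hn : 2 < n) (ht : 0 < t) (hQ : IsProtocol t Q)
    (hV : Validity t Q) (hC : Agreement t Q) (hdom : Dominates t Q (OptMaj n t))
    {A : Adversary n} (hA : Valid t A) {i : Fin n} (hi : A.Active i 1)
    (hmaj : MajBound n v (seenCount v A i)) : Q A i 1 = some v := by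
  obtain ⟨i', hi', hi'i⟩ := exists_mem_ne (hmaj.two_le hn) i
  rw [mem_filter, seen_zero_one_iff hi] at hi'
  let y j := if A.F 0 j i then A.init j else v
  let C : Finset (Fin n) := {j | ¬ A.F 0 j i}
  let B := crashAtOne y C fun _ r => r ≠ i
  have hiC : i ∉ C := by simp [C, hi.F_zero i]
  have hi'C : i' ∉ C := by simp [C, hi'.2.1]
  have hB : Valid t B :=
    valid_crashAtOne <|
      (card_le_numFaults fun j hj => faulty_of_not_F (by simpa [C] using hj)).trans hA
  have hAB : Q A i 1 = Q B i 1 :=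
    hQ.2 _ _ i 1 hA hB <| sameLocal_one hi (crashAtOne_active hiC 1) (by simp [B, C])
      fun j hj => by simp [B, y, hj]
  have hcount : seenCount v A i ≤ valCount v y := card_le_card fun j hj => by
    simp only [mem_filter, mem_univ, true_and, seen_zero_one_iff hi] at hj ⊢
    simp [y, hj.1, hj.2]
  have hi'v : Q B i' 1 = some v :=
    (hQ.2 _ _ i' 1 hB (valid_crashAtOne (by simp))
      (sameLocal_crashAtOne hi'C (by simp) (by simp [hi'i]) (by simp))).trans
      (failureFree_decides hn ht hQ hV hC hdom y (hmaj.mono hcount) i')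
  rw [hAB]
  exact eq_some_of_agreement hC hB (not_faulty_crashAtOne hiC) (not_faulty_crashAtOne hi'C)
    (hAB ▸ decided_of_majBound hdom hA hmaj) hi'v

end Dominating

theorem optmaj_dominating_decides_at_one_general (n t : ℕ) (hn : 2 < n) (h0 : 0 < t)
    (Q : ProtoDec n) (hQ : IsProtocol t Q) (hC : ConsensusSolves t Q)
    (hdom : Dominates t Q (OptMaj n t)) :
    ∀ A : Adversary n, Valid t A → ∀ (i : Fin n) (v : Bool), A.Active i 1 →
      Knows t (if v then Maj1 n else Maj0 n) A i 1 → Q A i 1 = some v :=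
  fun _ hA _ _ hi hk =>
    decides_of_majBound hn h0 hQ hC.2.1 hC.2.2 hdom hA hi (majBound_of_knows_maj hA hi hk)

/-- In any consensus protocol `Q` dominating `Opt_Maj` (with `n > 2`, `t > 0`):
if at time 1 process `i` knows `Maj = v`, then `i` decides `v` at or before time 1. -/
theorem optmaj_dominating_decides_at_one (n t : ℕ) (hn : 2 < n) (h0 : 0 < t) (ht : t < n)
    (Q : ProtoDec n) (hQ : IsProtocol t Q) (hC : ConsensusSolves t Q)
    (hdom : Dominates t Q (OptMaj n t)) :
    ∀ A : Adversary n, Valid t A → ∀ (i : Fin n) (v : Bool), A.Active i 1 →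
      Knows t (if v then Maj1 n else Maj0 n) A i 1 → Q A i 1 = some v :=
  optmaj_dominating_decides_at_one_general n t hn h0 Q hQ hC hdom
end
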